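/- arXiv:1005.1631 — 6 statements merged into one kernel-verified Lean document; each statement's English description precedes it below -/
import Mathlib

section
/- For every n ≥ 1, the Narayana h-polynomials satisfy the recurrence H_n(α,t) = (α+t)·H_{n-1}(α,t) + αt·Σ_{i=1}^{n-1} H_{i-1}(α,t)·H_{n-i-1}(α,t), where H_n(α,t) = Σ_{i=0}^{n} N(n,i)·α^{n-i}·t^i and H_0 = 1. (This is the inductive formula for the H-polynomial of the associahedron As^n obtained by shaving facets of the cylinder As^{n-1} × I.) -/
/-!
With `s = α + t` and `p = α t`, the Narayana polynomial has Touchard's expansion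
`H_n = Σ_m C(n,2m) Cat_m s^(n-2m) p^m`, which coefficientwise reduces to Vandermonde's identity.
The right side enumerates Motzkin paths of length `n` weighted by `s` per level step and `p` per up
step, and the recurrence is the decomposition of such a path at its first step: a level step, or an
up step whose matching down step encloses a shorter path. Algebraically, that decomposition is the
upper Vandermonde identity `Σ_{k+l=n} C(k,a) C(l,b) = C(n+1,a+b+1)` combined with the Catalan
recurrence.
-/

open Finset MvPolynomial

/-- The h-polynomial of the associahedron `As^n`:
`H_n(α,t) = Σ_{i=0}^{n} N(n,i)·α^{n-i}·t^i` where `N(n,i)` is the Narayana number. -/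
noncomputable def narayanaH (n : ℕ) : MvPolynomial (Fin 2) ℚ :=
  ∑ i ∈ Finset.range (n + 1),
    MvPolynomial.C ((1 / (n + 1 : ℚ)) * ((n + 1).choose i) * ((n + 1).choose (i + 1))) *
      MvPolynomial.X 0 ^ (n - i) * MvPolynomial.X 1 ^ i

namespace Nat

theorem sum_antidiagonal_choose_mul_choose (a b n : ℕ) :
    ∑ kl ∈ antidiagonal n, kl.1.choose a * kl.2.choose b = (n + 1).choose (a + b + 1) := by
  induction n generalizing b with
  | zero => cases a <;> cases b <;> simp [choose_eq_zero_of_lt]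
  | succ n ih =>
    rw [Finset.Nat.sum_antidiagonal_succ']
    cases b with
    | zero => simpa [choose_succ_succ' (n + 1)] using ih 0
    | succ b =>
      simp only [fun l => choose_succ_succ' l b, mul_add, sum_add_distrib, ih,
        choose_zero_succ, mul_zero, zero_add]
      rw [choose_succ_succ' (n + 1)]
      ring_nf

theorem sum_range_choose_mul_choose_add_one (a b : ℕ) :
    ∑ k ∈ range (a + 1), a.choose k * b.choose (k + 1) = (a + b).choose (a + 1) := by
  rw [add_choose_eq, Finset.Nat.sum_antidiagonal_succ', choose_succ_self, zero_mul, zero_add,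
    ← Finset.Nat.sum_antidiagonal_swap, Finset.Nat.sum_antidiagonal_eq_sum_range_succ_mk]
  refine sum_congr rfl fun k hk => ?_
  rw [mem_range] at hk
  dsimp only [Prod.swap]
  rw [choose_symm (by omega)]

theorem choose_mul_choose_sub_comm (n a b : ℕ) :
    n.choose a * (n - a).choose b = n.choose b * (n - b).choose a := by
  have ha := choose_mul (n := n) (le_add_right a b)
  have hb := choose_mul (n := n) (le_add_left b a)
  rw [Nat.add_sub_cancel_left] at ha
  rw [Nat.add_sub_cancel] at hb
  rw [← ha, ← hb, choose_symm_add]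

theorem add_one_mul_choose_mul_catalan_mul_choose {n m i : ℕ} (hmi : m ≤ i) :
    (n + 1) * n.choose (2 * m) * catalan m * (n - 2 * m).choose (i - m) =
      (n + 1).choose i * i.choose m * (n + 1 - i).choose (m + 1) := by
  have multinomial : n.choose (2 * m) * (2 * m).choose m * (n - 2 * m).choose (i - m) =
      n.choose i * i.choose m * (n - i).choose m := by
    rw [choose_mul (by omega), choose_mul hmi, mul_assoc, mul_assoc, show 2 * m - m = m by omega,
      show n - 2 * m = n - m - m by omega, show n - i = n - m - (i - m) by omega,
      choose_mul_choose_sub_comm]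
  have hi := choose_mul_succ_eq n i
  have hm : (n + 1 - i) * (n - i).choose m = (n + 1 - i).choose (m + 1) * (m + 1) := by
    rcases le_or_gt i n with hin | hni
    · rw [show n + 1 - i = n - i + 1 by omega]
      exact add_one_mul_choose_eq _ _
    · simp [show n + 1 - i = 0 by omega]
  apply Nat.eq_of_mul_eq_mul_left m.succ_pos
  calc (m + 1) * ((n + 1) * n.choose (2 * m) * catalan m * (n - 2 * m).choose (i - m))
      = n.choose (2 * m) * ((m + 1) * catalan m) * (n - 2 * m).choose (i - m) * (n + 1) := by
        ring
    _ = i.choose m * (n.choose i * (n + 1)) * (n - i).choose m := by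
        rw [succ_mul_catalan_eq_centralBinom, centralBinom_eq_two_mul_choose, multinomial]
        ring
    _ = (m + 1) * ((n + 1).choose i * i.choose m * (n + 1 - i).choose (m + 1)) := by
        rw [hi, mul_assoc, mul_assoc, hm]
        ring

end Nat

theorem Finset.sum_range_sum_range_eq_sum_range_sum_antidiagonal {M : Type*}
    [AddCommMonoid M] {N : ℕ} (f : ℕ → ℕ → M) (hf : ∀ a b, N ≤ a + b → f a b = 0) :
    ∑ a ∈ range N, ∑ b ∈ range N, f a b =
      ∑ m ∈ range N, ∑ kl ∈ antidiagonal m, f kl.1 kl.2 := by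
  simp only [Finset.Nat.sum_antidiagonal_eq_sum_range_succ f, sum_range_diag_flip]
  refine sum_congr rfl fun a ha => (sum_subset (range_subset_range.2 (by omega)) ?_).symm
  intro b _ hb
  simp only [mem_range, not_lt] at hb
  exact hf a b (by omega)

section Motzkin

variable {R : Type*} [CommSemiring R]

theorem choose_mul_pow_sub_mul_choose_mul_pow_sub (s : R) (k a l b : ℕ) :
    k.choose a * s ^ (k - a) * (l.choose b * s ^ (l - b)) =
      (k.choose a * l.choose b : ℕ) * s ^ (k + l - (a + b)) := by
  rcases lt_or_ge k a with hka | hak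
  · simp [Nat.choose_eq_zero_of_lt hka]
  rcases lt_or_ge l b with hlb | hbl
  · simp [Nat.choose_eq_zero_of_lt hlb]
  rw [show k + l - (a + b) = k - a + (l - b) by omega, pow_add]
  push_cast
  ring

theorem choose_mul_pow_add_one_sub (s : R) (k a : ℕ) :
    k.choose a * s ^ (k + 1 - a) = s * (k.choose a * s ^ (k - a)) := by
  rcases lt_or_ge k a with hka | hak
  · simp [Nat.choose_eq_zero_of_lt hka]
  rw [show k + 1 - a = k - a + 1 by omega, pow_succ]
  ring

theorem sum_antidiagonal_choose_mul_pow_sub (s : R) (a b n : ℕ) :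
    ∑ kl ∈ antidiagonal n, kl.1.choose a * s ^ (kl.1 - a) * (kl.2.choose b * s ^ (kl.2 - b)) =
      (n + 1).choose (a + b + 1) * s ^ (n - (a + b)) := by
  rw [← Nat.sum_antidiagonal_choose_mul_choose, Nat.cast_sum, sum_mul]
  refine sum_congr rfl fun kl hkl => ?_
  rw [choose_mul_pow_sub_mul_choose_mul_pow_sub, mem_antidiagonal.mp hkl]

def motzkinPoly (s p : R) (n : ℕ) : R :=
  ∑ m ∈ range (n + 1), n.choose (2 * m) * s ^ (n - 2 * m) * (catalan m * p ^ m)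

theorem motzkinPoly_eq_sum_range {n N : ℕ} (h : n < N) (s p : R) :
    motzkinPoly s p n =
      ∑ m ∈ range N, n.choose (2 * m) * s ^ (n - 2 * m) * (catalan m * p ^ m) := by
  refine sum_subset (range_subset_range.2 h) fun m _ hm => ?_
  rw [mem_range, not_lt] at hm
  simp [Nat.choose_eq_zero_of_lt (show n < 2 * m by omega)]

theorem motzkinPoly_one (s p : R) : motzkinPoly s p 1 = s * motzkinPoly s p 0 := by
  simp [motzkinPoly, sum_range_succ]

theorem sum_antidiagonal_motzkinPoly_mul (s p : R) (n : ℕ) :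
    ∑ kl ∈ antidiagonal n, motzkinPoly s p kl.1 * motzkinPoly s p kl.2 =
      ∑ m ∈ range (n + 1),
        (n + 1).choose (2 * m + 1) * s ^ (n - 2 * m) * (catalan (m + 1) * p ^ m) := by
  calc _ = ∑ kl ∈ antidiagonal n, ∑ a ∈ range (n + 1), ∑ b ∈ range (n + 1),
          kl.1.choose (2 * a) * s ^ (kl.1 - 2 * a) * (kl.2.choose (2 * b) * s ^ (kl.2 - 2 * b)) *
            (catalan a * catalan b * p ^ (a + b)) := by
        refine sum_congr rfl fun kl hkl => ?_
        have hn := mem_antidiagonal.mp hkl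
        rw [motzkinPoly_eq_sum_range (N := n + 1) (by omega),
          motzkinPoly_eq_sum_range (N := n + 1) (by omega), sum_mul_sum]
        exact sum_congr rfl fun a _ => sum_congr rfl fun b _ => by ring
    _ = ∑ a ∈ range (n + 1), ∑ b ∈ range (n + 1),
          (n + 1).choose (2 * (a + b) + 1) * s ^ (n - 2 * (a + b)) *
            (catalan a * catalan b * p ^ (a + b)) := by
        rw [sum_comm]
        refine sum_congr rfl fun a _ => ?_
        rw [sum_comm]
        refine sum_congr rfl fun b _ => ?_
        rw [← sum_mul, sum_antidiagonal_choose_mul_pow_sub, mul_add]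
    _ = _ := by
        rw [sum_range_sum_range_eq_sum_range_sum_antidiagonal]
        · refine sum_congr rfl fun m _ => ?_
          rw [catalan_succ', Nat.cast_sum, sum_mul, mul_sum]
          refine sum_congr rfl fun kl hkl => ?_
          rw [mem_antidiagonal.mp hkl]
          push_cast
          ring
        · intro a b hab
          simp [Nat.choose_eq_zero_of_lt (show n + 1 < 2 * (a + b) + 1 by omega)]

theorem motzkinPoly_add_two (s p : R) (n : ℕ) :
    motzkinPoly s p (n + 2) =
      s * motzkinPoly s p (n + 1) +
        p * ∑ kl ∈ antidiagonal n, motzkinPoly s p kl.1 * motzkinPoly s p kl.2 := by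
  -- Split off the terms `m = 0` of both Motzkin sums and the vanishing top term of the first;
  -- Pascal's rule on `C(n+2, 2m+2)` then matches the remaining terms.
  rw [sum_antidiagonal_motzkinPoly_mul, motzkinPoly, sum_range_succ' _ (n + 2),
    sum_range_succ _ (n + 1), Nat.choose_eq_zero_of_lt (show n + 2 < 2 * (n + 1 + 1) by omega),
    motzkinPoly, sum_range_succ' _ (n + 1), Nat.cast_zero, zero_mul, zero_mul, add_zero,
    mul_add s, mul_sum _ _ s, mul_sum _ _ p, add_right_comm, ← sum_add_distrib]
  congr 1
  · refine sum_congr rfl fun m _ => ?_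
    rw [show 2 * (m + 1) = 2 * m + 1 + 1 by ring, Nat.choose_succ_succ', Nat.cast_add, add_mul,
      add_mul, ← mul_assoc s, ← choose_mul_pow_add_one_sub,
      show n + 1 + 1 - (2 * m + 1 + 1) = n - 2 * m by omega]
    ring
  · simp [pow_succ]
    ring

theorem natCast_mul_add_pow_mul_mul_pow (x y : R) (n m : ℕ) :
    ((n + 1) * n.choose (2 * m) * catalan m : ℕ) * ((x + y) ^ (n - 2 * m) * (x * y) ^ m) =
      ∑ i ∈ range (n + 1),
        ((n + 1).choose i * i.choose m * (n + 1 - i).choose (m + 1) : ℕ) *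
          (x ^ (n - i) * y ^ i) := by
  have hsupp : Ico m (n - m + 1) ⊆ range (n + 1) := fun i hi => by
    simp only [mem_Ico, mem_range] at hi ⊢
    omega
  rw [← sum_subset hsupp fun i _ hi => ?vanish, sum_Ico_eq_sum_range]
  case vanish =>
    simp only [mem_Ico, not_and_or, not_le, not_lt] at hi
    rcases hi with hi | hi
    · simp [Nat.choose_eq_zero_of_lt hi]
    · simp [Nat.choose_eq_zero_of_lt (show n + 1 - i < m + 1 by omega)]
  rcases lt_or_ge n (2 * m) with hn | hn
  · simp [Nat.choose_eq_zero_of_lt hn, show n - m + 1 - m = 0 by omega]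
  rw [add_comm x y, add_pow, sum_mul, mul_sum, show n - m + 1 - m = n - 2 * m + 1 by omega]
  refine sum_congr rfl fun j hj => ?_
  rw [mem_range] at hj
  rw [← Nat.add_one_mul_choose_mul_catalan_mul_choose (i := m + j) (by omega),
    Nat.add_sub_cancel_left, show n - (m + j) = n - 2 * m - j + m by omega, pow_add, pow_add]
  push_cast
  ring

theorem natCast_mul_motzkinPoly_add_mul (x y : R) (n : ℕ) :
    ((n + 1 : ℕ) : R) * motzkinPoly (x + y) (x * y) n =
      ∑ i ∈ range (n + 1),
        ((n + 1).choose i * (n + 1).choose (i + 1) : ℕ) * (x ^ (n - i) * y ^ i) := by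
  simp only [motzkinPoly, mul_sum]
  calc _ = ∑ m ∈ range (n + 1), ((n + 1) * n.choose (2 * m) * catalan m : ℕ) *
          ((x + y) ^ (n - 2 * m) * (x * y) ^ m) := by
        refine sum_congr rfl fun m _ => ?_
        push_cast
        ring
    _ = _ := by
        simp only [natCast_mul_add_pow_mul_mul_pow]
        rw [sum_comm]
        refine sum_congr rfl fun i hi => ?_
        rw [mem_range] at hi
        rw [← sum_mul, ← Nat.cast_sum]
        congr 2
        simp only [mul_assoc, ← mul_sum]
        rw [← sum_subset (range_subset_range.2 (by omega : i + 1 ≤ n + 1)) fun m _ hm => ?_,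
          Nat.sum_range_choose_mul_choose_add_one, Nat.add_sub_of_le (by omega)]
        rw [mem_range, not_lt] at hm
        rw [Nat.choose_eq_zero_of_lt (by omega), zero_mul]

end Motzkin

theorem narayanaH_eq_motzkinPoly (n : ℕ) :
    narayanaH n = motzkinPoly (X 0 + X 1) (X 0 * X 1) n := by
  have hunit : C (1 / (n + 1 : ℚ)) * ((n + 1 : ℕ) : MvPolynomial (Fin 2) ℚ) = 1 := by
    rw [← map_natCast C, ← map_mul, Nat.cast_succ, one_div, inv_mul_cancel₀ (by positivity),
      map_one]
  rw [← one_mul (motzkinPoly _ _ n), ← hunit, mul_assoc, natCast_mul_motzkinPoly_add_mul,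
    mul_sum, narayanaH]
  refine sum_congr rfl fun i _ => ?_
  simp only [map_mul, map_natCast]
  push_cast
  ring

theorem narayanaH_recurrence (n : ℕ) (hn : 1 ≤ n) :
    narayanaH n =
      (MvPolynomial.X 0 + MvPolynomial.X 1) * narayanaH (n - 1) +
        MvPolynomial.X 0 * MvPolynomial.X 1 *
          ∑ i ∈ Finset.Icc 1 (n - 1), narayanaH (i - 1) * narayanaH (n - i - 1) := by
  simp only [narayanaH_eq_motzkinPoly]
  generalize (X 0 + X 1 : MvPolynomial (Fin 2) ℚ) = s, (X 0 * X 1 : MvPolynomial (Fin 2) ℚ) = p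
  obtain ⟨n, rfl⟩ := Nat.exists_eq_add_of_le' hn
  rcases n with _ | n
  · simp [motzkinPoly_one]
  · rw [motzkinPoly_add_two, Finset.Nat.sum_antidiagonal_eq_sum_range_succ
      (fun k l => motzkinPoly s p k * motzkinPoly s p l), ← Ico_add_one_right_eq_Icc,
      sum_Ico_eq_sum_range, Nat.add_sub_cancel, Nat.add_sub_cancel]
    congr 2
    refine sum_congr rfl fun k _ => ?_
    rw [show 1 + k - 1 = k by omega, show n + 1 + 1 - (1 + k) - 1 = n - k by omega]
end

section
/- For every n ≥ 1, the polynomials B_n(α,t) = Σ_{i=0}^{n} binom(n,i)²·α^{n-i}·t^i (the h-polynomials of the cyclohedra Cy^n) satisfy the recurrence B_n(α,t) = (α+t)·B_{n-1}(α,t) + 2αt·Σ_{i=1}^{n-1} H_{i-1}(α,t)·B_{n-i-1}(α,t), where H_m is the Narayana h-polynomial and B_0 = 1. -/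
open Finset MvPolynomial

/-- The h-polynomial of the cyclohedron `Cy^n`:
`B_n(α,t) = Σ_{i=0}^{n} binom(n,i)²·α^{n-i}·t^i`. -/
noncomputable def cycloH (n : ℕ) : MvPolynomial (Fin 2) ℚ :=
  ∑ i ∈ Finset.range (n + 1),
    MvPolynomial.C ((n.choose i : ℚ) ^ 2) *
      MvPolynomial.X 0 ^ (n - i) * MvPolynomial.X 1 ^ i

namespace CycloAux

noncomputable def D (r m : ℕ) : MvPolynomial (Fin 2) ℚ :=
  ∑ j ∈ Finset.range (m + 1),
    MvPolynomial.C ((m.choose j : ℚ) * (m.choose (j + r))) *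
      MvPolynomial.X 0 ^ (m - j) * MvPolynomial.X 1 ^ j

lemma D_zero_eq (m : ℕ) : D 0 m = cycloH m := by
  unfold D cycloH
  refine Finset.sum_congr rfl fun j hj => ?_
  congr 1
  · congr 1
    rw [Nat.add_zero, sq]

lemma D_succ_zero (r : ℕ) : D (r + 1) 0 = 0 := by
  simp [D, Nat.choose_eq_zero_of_lt (Nat.succ_pos r)]

lemma D_zero_zero : D 0 0 = 1 := by
  simp [D]

-- key Narayana identity: C(k,j+1)^2 = N(k,j+1) + C(k,j)*C(k,j+2)
lemma key (k j : ℕ) :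
    ((k.choose (j + 1) : ℚ)) * (k.choose (j + 1)) =
      (1 / (k + 1 : ℚ)) * ((k + 1).choose (j + 1)) * ((k + 1).choose (j + 2)) +
        (k.choose j : ℚ) * (k.choose (j + 2)) := by
  rcases Nat.lt_or_ge j k with h | h
  · have hj1k : j + 1 ≤ k := h
    have hk1 : ((k : ℚ) + 1) ≠ 0 := by positivity
    have hj2 : ((j : ℚ) + 2) ≠ 0 := by positivity
    have hkj : ((k : ℚ) - j) ≠ 0 := by
      have : (j : ℚ) < k := by exact_mod_cast h
      intro hz; nlinarith
    have e1 : ((k + 1).choose (j + 2) : ℚ) * ((j : ℚ) + 2) = ((k : ℚ) + 1) * (k.choose (j + 1)) := by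
      have := Nat.add_one_mul_choose_eq k (j + 1)
      have := congrArg (Nat.cast (R := ℚ)) this
      push_cast at this
      linarith [this]
    have e2 : ((k + 1).choose (j + 1) : ℚ) * ((k : ℚ) - j) = (k.choose (j + 1) : ℚ) * ((k : ℚ) + 1) := by
      have h0 := Nat.choose_mul_succ_eq (k + 1 - 1) (j + 1)
      have h1 := Nat.choose_mul_succ_eq k (j + 1)
      have hsub : ((k - j : ℕ) : ℚ) = (k : ℚ) - j := by
        rw [Nat.cast_sub (le_of_lt h)]
      have := congrArg (Nat.cast (R := ℚ)) h1
      push_cast [hsub] at this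
      linarith [this]
    have e3 : (k.choose (j + 1) : ℚ) * ((j : ℚ) + 1) = (k.choose j : ℚ) * ((k : ℚ) - j) := by
      have h1 := Nat.choose_succ_right_eq k j
      have hsub : ((k - j : ℕ) : ℚ) = (k : ℚ) - j := by
        rw [Nat.cast_sub (le_of_lt h)]
      have := congrArg (Nat.cast (R := ℚ)) h1
      push_cast [hsub] at this
      linarith [this]
    have e4 : (k.choose (j + 2) : ℚ) * ((j : ℚ) + 2) = (k.choose (j + 1) : ℚ) * ((k : ℚ) - j - 1) := by
      have h1 := Nat.choose_succ_right_eq k (j + 1)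
      have hsub : ((k - (j + 1) : ℕ) : ℚ) = (k : ℚ) - j - 1 := by
        rw [Nat.cast_sub hj1k]; push_cast; ring
      have := congrArg (Nat.cast (R := ℚ)) h1
      push_cast [hsub] at this
      linarith [this]
    have hA : ((k + 1).choose (j + 1) : ℚ) = (k.choose (j + 1) : ℚ) * ((k : ℚ) + 1) / ((k : ℚ) - j) := by
      rw [eq_div_iff hkj]; linarith [e2]
    have hB : ((k + 1).choose (j + 2) : ℚ) = ((k : ℚ) + 1) * (k.choose (j + 1)) / ((j : ℚ) + 2) := by
      rw [eq_div_iff hj2]; linarith [e1]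
    have hp : (k.choose j : ℚ) = (k.choose (j + 1) : ℚ) * ((j : ℚ) + 1) / ((k : ℚ) - j) := by
      rw [eq_div_iff hkj]; linarith [e3]
    have hq : (k.choose (j + 2) : ℚ) = (k.choose (j + 1) : ℚ) * ((k : ℚ) - j - 1) / ((j : ℚ) + 2) := by
      rw [eq_div_iff hj2]; linarith [e4]
    rw [hA, hB, hp, hq]
    field_simp
    ring
  · have h1 : k < j + 1 := by omega
    have h2 : k < j + 2 := by omega
    have h3 : k + 1 < j + 2 := by omega
    simp [Nat.choose_eq_zero_of_lt h1, Nat.choose_eq_zero_of_lt h2, Nat.choose_eq_zero_of_lt h3]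


lemma peel (M : ℕ) (c : ℕ → ℚ) :
    ∑ j ∈ Finset.range (M + 1), MvPolynomial.C (c j) * X 0 ^ (M - j) * X 1 ^ j
      = MvPolynomial.C (c 0) * X 0 ^ M +
        ∑ j ∈ Finset.range M,
          MvPolynomial.C (c (j + 1)) * X 0 ^ (M - (j + 1)) * X 1 ^ (j + 1) := by
  rw [Finset.sum_range_succ' (fun j => MvPolynomial.C (c j) * X 0 ^ (M - j) * X 1 ^ j) M]
  simp [add_comm]

lemma X0_mul_D (q m : ℕ) :
    X 0 * D q m = ∑ j ∈ Finset.range (m + 2),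
      MvPolynomial.C ((m.choose j : ℚ) * (m.choose (j + q))) *
        X 0 ^ (m + 1 - j) * X 1 ^ j := by
  rw [Finset.sum_range_succ, Nat.choose_succ_self]
  rw [D, Finset.mul_sum]
  simp only [Nat.cast_zero, zero_mul, MvPolynomial.C_0, mul_zero, zero_mul, add_zero]
  refine Finset.sum_congr rfl fun j hj => ?_
  have hjm : j ≤ m := Nat.lt_succ_iff.mp (Finset.mem_range.mp hj)
  rw [show m + 1 - j = (m - j) + 1 from by omega]
  ring

lemma X1_mul_D (q m : ℕ) :
    X 1 * D q m = ∑ j ∈ Finset.range (m + 1),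
      MvPolynomial.C ((m.choose j : ℚ) * (m.choose (j + q))) *
        X 0 ^ (m - j) * X 1 ^ (j + 1) := by
  rw [D, Finset.mul_sum]
  exact Finset.sum_congr rfl fun j hj => by ring


lemma X1_mul_D_canon (q m : ℕ) :
    X 1 * D q m = ∑ j ∈ Finset.range (m + 1 + 1),
      MvPolynomial.C (if j = 0 then (0 : ℚ)
          else (m.choose (j - 1) : ℚ) * (m.choose (j - 1 + q))) *
        X 0 ^ (m + 1 - j) * X 1 ^ j := by
  rw [X1_mul_D]
  conv_rhs => rw [Finset.sum_range_succ']
  simp only [Nat.succ_ne_zero, if_false, Nat.add_sub_cancel, Nat.succ_sub_succ_eq_sub,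
    Nat.sub_zero, if_pos rfl, map_zero, zero_mul, add_zero, reduceIte]

lemma D_rec (q m : ℕ) :
    D (q + 1) (m + 1) =
      X 0 * D (q + 1) m + X 0 * D q m + X 1 * D (q + 2) m + X 1 * D (q + 1) m := by
  rw [D, X0_mul_D, X0_mul_D, X1_mul_D_canon, X1_mul_D_canon,
    ← Finset.sum_add_distrib, ← Finset.sum_add_distrib, ← Finset.sum_add_distrib]
  refine Finset.sum_congr rfl fun j _ => ?_
  rcases j with _ | k
  · simp only [reduceIte, map_zero, zero_mul, add_zero, Nat.zero_add, Nat.choose_zero_right,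
      Nat.cast_one, one_mul]
    rw [Nat.choose_succ_succ', Nat.cast_add, map_add]
    ring
  · simp only [Nat.succ_ne_zero, if_false, Nat.add_sub_cancel, reduceIte]
    rw [show k + 1 + (q + 1) = k + (q + 2) from by omega,
      show k + 1 + q = k + (q + 1) from by omega]
    have h1 : ((m + 1).choose (k + 1) : ℚ) = (m.choose k : ℚ) + (m.choose (k + 1) : ℚ) := by
      rw [Nat.choose_succ_succ']; push_cast; ring
    have h2 : ((m + 1).choose (k + (q + 2)) : ℚ)
        = (m.choose (k + (q + 1)) : ℚ) + (m.choose (k + (q + 2)) : ℚ) := by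
      rw [show k + (q + 2) = k + (q + 1) + 1 from by omega, Nat.choose_succ_succ']
      push_cast; ring
    rw [h1, h2]
    simp only [map_mul, map_add]
    ring


lemma D_zero_rec (m : ℕ) :
    D 0 (m + 1) = X 0 * D 0 m + X 1 * D 0 m + 2 * (X 1 * D 1 m) := by
  rw [D, X0_mul_D, X1_mul_D_canon, X1_mul_D_canon, Finset.mul_sum,
    ← Finset.sum_add_distrib, ← Finset.sum_add_distrib]
  refine Finset.sum_congr rfl fun j _ => ?_
  rcases j with _ | k
  · simp
  · simp only [Nat.succ_ne_zero, if_false, Nat.add_sub_cancel, reduceIte, Nat.add_zero]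
    have h1 : ((m + 1).choose (k + 1) : ℚ) = (m.choose k : ℚ) + (m.choose (k + 1) : ℚ) := by
      rw [Nat.choose_succ_succ']; push_cast; ring
    rw [h1]
    simp only [map_mul, map_add]
    ring

lemma X0_mul_narayana (k : ℕ) :
    X 0 * narayanaH k = ∑ j ∈ Finset.range (k + 1 + 1),
      MvPolynomial.C ((1 / (k + 1 : ℚ)) * ((k + 1).choose j) * ((k + 1).choose (j + 1))) *
        X 0 ^ (k + 1 - j) * X 1 ^ j := by
  rw [Finset.sum_range_succ]
  have h0 : (k + 1).choose (k + 1 + 1) = 0 := Nat.choose_succ_self (k + 1)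
  rw [h0]
  simp only [Nat.cast_zero, mul_zero, zero_mul, MvPolynomial.C_0, add_zero]
  rw [narayanaH, Finset.mul_sum]
  refine Finset.sum_congr rfl fun j hj => ?_
  have hjm : j ≤ k := Nat.lt_succ_iff.mp (Finset.mem_range.mp hj)
  rw [show k + 1 - j = (k - j) + 1 from by omega]
  ring

lemma D_narayana (k : ℕ) :
    X 0 * D 0 k = X 0 * narayanaH k + X 1 * D 2 k := by
  rw [X0_mul_D, X0_mul_narayana, X1_mul_D_canon, ← Finset.sum_add_distrib]
  refine Finset.sum_congr rfl fun j _ => ?_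
  rcases j with _ | i
  · have hco : ((k.choose 0 : ℕ) : ℚ) * ((k.choose (0 + 0) : ℕ) : ℚ)
        = (1 / ((k : ℚ) + 1)) * (((k + 1).choose 0 : ℕ) : ℚ) * (((k + 1).choose (0 + 1) : ℕ) : ℚ) := by
      simp only [Nat.zero_add, Nat.add_zero, Nat.choose_zero_right, Nat.choose_one_right,
        Nat.cast_one, one_mul, mul_one]
      push_cast
      field_simp
    simp only [reduceIte, map_zero, zero_mul, add_zero]
    rw [hco]
  · simp only [Nat.succ_ne_zero, if_false, Nat.add_sub_cancel, reduceIte, Nat.add_zero]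
    have hkey := key k i
    rw [show i + 1 + 1 = i + 2 from by omega]
    rw [hkey]
    simp only [map_add, map_mul]
    ring


lemma L5 (m : ℕ) : ∀ r, D (r + 1) m
    = X 0 * ∑ i ∈ Finset.Icc 1 m, narayanaH (i - 1) * D r (m - i) := by
  induction m with
  | zero =>
    intro r
    simp [D_succ_zero]
  | succ m ih =>
    intro r
    rw [Finset.sum_Icc_succ_top (by omega : 1 ≤ m + 1)]
    rw [show m + 1 - (m + 1) = 0 from by omega, show m + 1 - 1 = m from by omega]
    rcases r with _ | r'
    · have hstep : ∑ i ∈ Finset.Icc 1 m, narayanaH (i - 1) * D 0 (m + 1 - i)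
          = X 0 * ∑ i ∈ Finset.Icc 1 m, narayanaH (i - 1) * D 0 (m - i)
            + X 1 * ∑ i ∈ Finset.Icc 1 m, narayanaH (i - 1) * D 0 (m - i)
            + 2 * X 1 * ∑ i ∈ Finset.Icc 1 m, narayanaH (i - 1) * D 1 (m - i) := by
        rw [Finset.mul_sum, Finset.mul_sum, Finset.mul_sum, ← Finset.sum_add_distrib,
          ← Finset.sum_add_distrib]
        refine Finset.sum_congr rfl fun i hi => ?_
        obtain ⟨h1, h2⟩ := Finset.mem_Icc.mp hi
        rw [show m + 1 - i = (m - i) + 1 from by omega, D_zero_rec]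
        ring
      rw [hstep]
      have i0 : D 1 m = X 0 * ∑ i ∈ Finset.Icc 1 m, narayanaH (i - 1) * D 0 (m - i) := ih 0
      have i1 : D 2 m = X 0 * ∑ i ∈ Finset.Icc 1 m, narayanaH (i - 1) * D 1 (m - i) := ih 1
      have hrec : D 1 (m + 1) = X 0 * D 1 m + X 0 * D 0 m + X 1 * D 2 m + X 1 * D 1 m :=
        D_rec 0 m
      rw [hrec, D_narayana m, i0, i1, D_zero_zero]
      ring
    · have hstep : ∑ i ∈ Finset.Icc 1 m, narayanaH (i - 1) * D (r' + 1) (m + 1 - i)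
          = X 0 * ∑ i ∈ Finset.Icc 1 m, narayanaH (i - 1) * D (r' + 1) (m - i)
            + X 0 * ∑ i ∈ Finset.Icc 1 m, narayanaH (i - 1) * D r' (m - i)
            + X 1 * ∑ i ∈ Finset.Icc 1 m, narayanaH (i - 1) * D (r' + 2) (m - i)
            + X 1 * ∑ i ∈ Finset.Icc 1 m, narayanaH (i - 1) * D (r' + 1) (m - i) := by
        rw [Finset.mul_sum, Finset.mul_sum, Finset.mul_sum, Finset.mul_sum,
          ← Finset.sum_add_distrib, ← Finset.sum_add_distrib, ← Finset.sum_add_distrib]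
        refine Finset.sum_congr rfl fun i hi => ?_
        obtain ⟨h1, h2⟩ := Finset.mem_Icc.mp hi
        rw [show m + 1 - i = (m - i) + 1 from by omega, D_rec]
        ring
      rw [D_succ_zero, hstep]
      have i0 : D (r' + 1) m = X 0 * ∑ i ∈ Finset.Icc 1 m, narayanaH (i - 1) * D r' (m - i) :=
        ih r'
      have i1 : D (r' + 2) m
          = X 0 * ∑ i ∈ Finset.Icc 1 m, narayanaH (i - 1) * D (r' + 1) (m - i) := ih (r' + 1)
      have i2 : D (r' + 3) m
          = X 0 * ∑ i ∈ Finset.Icc 1 m, narayanaH (i - 1) * D (r' + 2) (m - i) := ih (r' + 2)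
      have hrec : D (r' + 1 + 1) (m + 1)
          = X 0 * D (r' + 1 + 1) m + X 0 * D (r' + 1) m + X 1 * D (r' + 1 + 2) m
            + X 1 * D (r' + 1 + 1) m := D_rec (r' + 1) m
      rw [hrec, show r' + 1 + 1 = r' + 2 from by omega, show r' + 1 + 2 = r' + 3 from by omega,
        i0, i1, i2]
      ring

end CycloAux

theorem cycloH_recurrence (n : ℕ) (hn : 1 ≤ n) :
    cycloH n =
      (MvPolynomial.X 0 + MvPolynomial.X 1) * cycloH (n - 1) +
        2 * (MvPolynomial.X 0 * MvPolynomial.X 1) *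
          ∑ i ∈ Finset.Icc 1 (n - 1), narayanaH (i - 1) * cycloH (n - i - 1) := by
  obtain ⟨m, rfl⟩ : ∃ m, n = m + 1 := ⟨n - 1, by omega⟩
  rw [show m + 1 - 1 = m from by omega]
  rw [← CycloAux.D_zero_eq (m + 1), ← CycloAux.D_zero_eq m]
  have hsum : ∀ i ∈ Finset.Icc 1 m,
      narayanaH (i - 1) * cycloH (m + 1 - i - 1) = narayanaH (i - 1) * CycloAux.D 0 (m - i) :=
    fun i hi => by rw [show m + 1 - i - 1 = m - i from by omega, CycloAux.D_zero_eq]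
  rw [Finset.sum_congr rfl hsum]
  have h5 : CycloAux.D 1 m
      = X 0 * ∑ i ∈ Finset.Icc 1 m, narayanaH (i - 1) * CycloAux.D 0 (m - i) :=
    CycloAux.L5 m 0
  rw [CycloAux.D_zero_rec m, h5]
  ring
end

section
/- For every n ≥ 1, the associahedron γ-polynomials Γ_n(τ) = Σ_{i=0}^{⌊n/2⌋} (1/(i+1))·binom(2i,i)·binom(n,2i)·τ^i satisfy the recurrence Γ_n(τ) = Γ_{n-1}(τ) + τ·Σ_{i=1}^{n-1} Γ_{i-1}(τ)·Γ_{n-i-1}(τ), with Γ_0 = 1. -/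
/-!
The coefficient of `τ^j` in `Γ_n` is `Cat_j · C(n, 2j)`. In the coefficient of `τ^j` of the
convolution `Σ_{a+b=k} Γ_a Γ_b`, the lower-index Vandermonde identity
`Σ_{a+b=k} C(a, 2i) C(b, 2i') = C(k+1, 2j+1)` (for `i + i' = j`) factors out a binomial, and
Segner's recurrence collapses the remaining `Σ_{i+i'=j} Cat_i Cat_{i'}` to `Cat_{j+1}`.
Pascal's rule `C(k+1, 2j+2) + C(k+1, 2j+1) = C(k+2, 2j+2)` then gives the recurrence.
-/

open Finset Polynomial

/-- The γ-polynomial of the associahedron `As^n`: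
`Γ_n(τ) = Σ_{i=0}^{⌊n/2⌋} (1/(i+1))·binom(2i,i)·binom(n,2i)·τ^i`. -/
noncomputable def gammaAs (n : ℕ) : Polynomial ℚ :=
  ∑ i ∈ Finset.range (n / 2 + 1),
    Polynomial.C ((1 / (i + 1 : ℚ)) * ((2 * i).choose i) * (n.choose (2 * i))) *
      Polynomial.X ^ i

theorem Nat.sum_antidiagonal_choose_mul_choose_s8 (p q n : ℕ) :
    ∑ ij ∈ antidiagonal n, ij.1.choose p * ij.2.choose q = (n + 1).choose (p + q + 1) := by
  induction n generalizing q with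
  | zero => cases p <;> cases q <;> simp [Nat.choose_eq_zero_of_lt]
  | succ n ih =>
    rw [Nat.sum_antidiagonal_succ']
    cases q with
    | zero =>
      have := ih 0
      simp only [Nat.choose_zero_right, mul_one] at this ⊢
      rw [this, add_zero, Nat.choose_succ_succ' (n + 1) p, add_comm]
    | succ q =>
      simp only [Nat.choose_succ_succ' _ q, mul_add, sum_add_distrib, ih, Nat.choose_zero_succ,
        mul_zero, zero_add]
      rw [show p + (q + 1) + 1 = p + q + 1 + 1 by ring, Nat.choose_succ_succ' (n + 1)]

theorem cast_catalan_eq_one_div_mul_choose (i : ℕ) :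
    (catalan i : ℚ) = (1 / (i + 1 : ℚ)) * ((2 * i).choose i) := by
  rw [← Nat.centralBinom_eq_two_mul_choose, ← succ_mul_catalan_eq_centralBinom]
  push_cast
  field_simp

theorem coeff_gammaAs (n k : ℕ) :
    (gammaAs n).coeff k = catalan k * n.choose (2 * k) := by
  rw [gammaAs, finsetSum_coeff, sum_eq_single k]
  · rw [coeff_C_mul_X_pow, if_pos rfl, cast_catalan_eq_one_div_mul_choose]
  · intro i _ hik
    rw [coeff_C_mul_X_pow, if_neg hik.symm]
  · intro hk
    rw [mem_range] at hk
    simp [Nat.choose_eq_zero_of_lt (show n < 2 * k by omega)]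

theorem coeff_sum_antidiagonal_gammaAs_mul (k m : ℕ) :
    (∑ ij ∈ antidiagonal k, gammaAs ij.1 * gammaAs ij.2).coeff m =
      catalan (m + 1) * (k + 1).choose (2 * m + 1) := by
  simp only [finsetSum_coeff, coeff_mul, coeff_gammaAs]
  rw [sum_comm]
  calc ∑ ab ∈ antidiagonal m, ∑ ij ∈ antidiagonal k,
        (catalan ab.1 : ℚ) * ij.1.choose (2 * ab.1) * (catalan ab.2 * ij.2.choose (2 * ab.2))
      = ∑ ab ∈ antidiagonal m, (catalan ab.1 * catalan ab.2 : ℚ) * (k + 1).choose (2 * m + 1) := by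
        refine sum_congr rfl fun ab hab => ?_
        rw [HasAntidiagonal.mem_antidiagonal] at hab
        rw [← hab, mul_add, ← Nat.sum_antidiagonal_choose_mul_choose_s8, Nat.cast_sum, mul_sum]
        push_cast
        exact sum_congr rfl fun _ _ => by ring
    _ = catalan (m + 1) * (k + 1).choose (2 * m + 1) := by
        rw [← sum_mul, catalan_succ']
        push_cast
        rfl

theorem gammaAs_add_two (k : ℕ) :
    gammaAs (k + 2) =
      gammaAs (k + 1) + X * ∑ ij ∈ antidiagonal k, gammaAs ij.1 * gammaAs ij.2 := by
  ext (_ | m)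
  · simp [coeff_gammaAs]
  · rw [coeff_add, coeff_X_mul, coeff_gammaAs, coeff_gammaAs, coeff_sum_antidiagonal_gammaAs_mul,
      show 2 * (m + 1) = 2 * m + 1 + 1 by ring, Nat.choose_succ_succ (k + 1)]
    push_cast
    ring

theorem sum_antidiagonal_eq_sum_Icc {M : Type*} [AddCommMonoid M] (f : ℕ → ℕ → M) (k : ℕ) :
    ∑ ij ∈ antidiagonal k, f ij.1 ij.2 = ∑ i ∈ Icc 1 (k + 1), f (i - 1) (k + 1 - i) := by
  refine sum_nbij' (fun ij => ij.1 + 1) (fun i => (i - 1, k + 1 - i)) ?_ ?_ ?_ ?_ ?_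
  all_goals simp +contextual [Prod.ext_iff]
  any_goals omega
  rintro a b rfl
  simp

theorem gammaAs_recurrence (n : ℕ) (hn : 1 ≤ n) :
    gammaAs n =
      gammaAs (n - 1) +
        Polynomial.X * ∑ i ∈ Finset.Icc 1 (n - 1), gammaAs (i - 1) * gammaAs (n - i - 1) := by
  obtain ⟨m, rfl⟩ : ∃ m, n = m + 1 := ⟨n - 1, by omega⟩
  rcases m with _ | k
  · simp [gammaAs]
  · simpa [sum_antidiagonal_eq_sum_Icc (fun i j => gammaAs i * gammaAs j), Nat.sub_sub]
      using gammaAs_add_two k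
end

section
/- For all natural numbers n ≥ 1 and 0 ≤ i ≤ n: binom(n,i) ≤ (1/(n+1))·binom(n+1,i)·binom(n+1,i+1), i.e. (n+1)·binom(n,i) ≤ binom(n+1,i)·binom(n+1,i+1). -/
/-- `h_i(I^n) ≤ h_i(As^n)`: for `n ≥ 1` and `0 ≤ i ≤ n`,
`binom(n,i) ≤ (1/(n+1))·binom(n+1,i)·binom(n+1,i+1)`, i.e.
`(n+1)·binom(n,i) ≤ binom(n+1,i)·binom(n+1,i+1)`. -/
theorem cube_le_associahedron_h (n i : ℕ) (hn : 1 ≤ n) (hi : i ≤ n) :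
    (n + 1) * n.choose i ≤ (n + 1).choose i * (n + 1).choose (i + 1) := by
  have key : (n + 1) * n.choose i = (n + 1).choose (i + 1) * (i + 1) :=
    Nat.add_one_mul_choose_eq n i
  have h : i + 1 ≤ (n + 1).choose i := by
    calc i + 1 = (i + 1).choose i := (Nat.choose_succ_self_right i).symm
    _ ≤ (n + 1).choose i := Nat.choose_le_choose i (by omega)
  rw [key, mul_comm ((n+1).choose i)]
  exact Nat.mul_le_mul_left _ h
end

section
/- For all natural numbers n ≥ 1 and 0 ≤ i ≤ n: binom(n,i)² ≤ A(n+1,i), where A(m,k) is the Eulerian number, i.e. the number of permutations of {1,…,m} with exactly k descents. -/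
open scoped Classical

/-- The number of descents of a permutation `σ` of `Fin m`. -/
noncomputable def numDescents (m : ℕ) (σ : Equiv.Perm (Fin m)) : ℕ :=
  ((Finset.range m).filter fun i =>
    ∃ h : i + 1 < m, σ ⟨i + 1, h⟩ < σ ⟨i, Nat.lt_of_succ_lt h⟩).card

/-- The Eulerian number `A(m,k)`: the number of permutations of `{1,…,m}` with exactly
`k` descents. -/
noncomputable def eulerian (m k : ℕ) : ℕ :=
  ((Finset.univ : Finset (Equiv.Perm (Fin m))).filter fun σ => numDescents m σ = k).card

noncomputable def DesSet (m : ℕ) (σ : Equiv.Perm (Fin m)) : Finset ℕ :=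
  (Finset.range m).filter fun i =>
    ∃ h : i + 1 < m, σ ⟨i + 1, h⟩ < σ ⟨i, Nat.lt_of_succ_lt h⟩

lemma mem_DesSet {m : ℕ} {σ : Equiv.Perm (Fin m)} {i : ℕ} :
    i ∈ DesSet m σ ↔ ∃ h : i + 1 < m, σ ⟨i + 1, h⟩ < σ ⟨i, Nat.lt_of_succ_lt h⟩ := by
  simp only [DesSet, Finset.mem_filter, Finset.mem_range]
  constructor
  · rintro ⟨-, h⟩; exact h
  · rintro ⟨h, h2⟩; exact ⟨Nat.lt_of_succ_lt h, h, h2⟩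

/-- Insert the maximal value at position `p`. -/
noncomputable def insHat (m : ℕ) (τ : Equiv.Perm (Fin m)) (p : Fin (m+1)) :
    Equiv.Perm (Fin (m+1)) where
  toFun j :=
    if h : (j:ℕ) < (p:ℕ) then
      (τ ⟨j, lt_of_lt_of_le h (Nat.lt_succ_iff.mp p.isLt)⟩).castSucc
    else if h2 : (j:ℕ) = (p:ℕ) then Fin.last m
    else (τ ⟨(j:ℕ) - 1, by have := j.isLt; omega⟩).castSucc
  invFun v :=
    if h : (v:ℕ) < m then
      (if (τ.symm ⟨v, h⟩ : ℕ) < (p:ℕ) then (τ.symm ⟨v, h⟩).castSucc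
       else (τ.symm ⟨v, h⟩).succ)
    else p
  left_inv := by
    intro j
    dsimp only
    rcases lt_trichotomy (j:ℕ) (p:ℕ) with hj | hj | hj
    · simp only [dif_pos hj]
      have h1 : ((τ ⟨j, lt_of_lt_of_le hj (Nat.lt_succ_iff.mp p.isLt)⟩).castSucc : ℕ) < m :=
        (τ _).isLt
      rw [dif_pos h1]
      have h2 : τ.symm ⟨((τ ⟨j, lt_of_lt_of_le hj (Nat.lt_succ_iff.mp p.isLt)⟩).castSucc : ℕ), h1⟩
          = ⟨j, lt_of_lt_of_le hj (Nat.lt_succ_iff.mp p.isLt)⟩ := by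
        rw [show (⟨((τ _).castSucc : ℕ), h1⟩ : Fin m) = τ ⟨j, _⟩ from rfl]
        exact τ.symm_apply_apply _
      rw [h2, if_pos hj]
      ext; simp
    · rw [dif_neg (show ¬ ((j:ℕ) < (p:ℕ)) by omega), dif_pos hj]
      rw [dif_neg (show ¬ ((Fin.last m : ℕ) < m) by simp)]
      ext; exact hj.symm
    · rw [dif_neg (show ¬ ((j:ℕ) < (p:ℕ)) by omega), dif_neg (show ¬ ((j:ℕ) = (p:ℕ)) by omega)]
      have h1 : ((τ ⟨(j:ℕ) - 1, by have := j.isLt; omega⟩).castSucc : ℕ) < m := (τ _).isLt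
      rw [dif_pos h1]
      have h2 : τ.symm ⟨((τ ⟨(j:ℕ) - 1, by have := j.isLt; omega⟩).castSucc : ℕ), h1⟩
          = ⟨(j:ℕ) - 1, by have := j.isLt; omega⟩ := by
        rw [show (⟨((τ _).castSucc : ℕ), h1⟩ : Fin m) = τ ⟨(j:ℕ) - 1, _⟩ from rfl]
        exact τ.symm_apply_apply _
      rw [h2, if_neg (by simp; omega)]
      ext; simp; omega
  right_inv := by
    intro v
    dsimp only
    by_cases hv : (v:ℕ) < m
    · rw [dif_pos hv]
      by_cases ht : ((τ.symm ⟨v, hv⟩ : Fin m) : ℕ) < (p:ℕ)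
      · rw [if_pos ht]
        have h1 : (((τ.symm ⟨v, hv⟩).castSucc : Fin (m+1)) : ℕ) < (p:ℕ) := ht
        rw [dif_pos h1]
        have h2 : (⟨(((τ.symm ⟨v, hv⟩).castSucc : Fin (m+1)) : ℕ), lt_of_lt_of_le h1 (Nat.lt_succ_iff.mp p.isLt)⟩ : Fin m) = τ.symm ⟨v, hv⟩ := by
          ext; simp
        rw [h2, τ.apply_symm_apply]
        ext; simp
      · rw [if_neg ht]
        have h1 : ¬ ((((τ.symm ⟨v, hv⟩).succ : Fin (m+1)) : ℕ) < (p:ℕ)) := by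
          simp only [Fin.val_succ]; omega
        have h2 : ¬ ((((τ.symm ⟨v, hv⟩).succ : Fin (m+1)) : ℕ) = (p:ℕ)) := by
          simp only [Fin.val_succ]; omega
        rw [dif_neg h1, dif_neg h2]
        have h3 : (⟨(((τ.symm ⟨v, hv⟩).succ : Fin (m+1)) : ℕ) - 1, by have := ((τ.symm ⟨v, hv⟩).succ).isLt; omega⟩ : Fin m) = τ.symm ⟨v, hv⟩ := by
          ext; simp
        rw [h3, τ.apply_symm_apply]
        ext; simp
    · rw [dif_neg hv]
      by_cases hp : (p:ℕ) < (p:ℕ)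
      · omega
      · rw [dif_neg hp, dif_pos rfl]
        ext
        simp only [Fin.val_last]
        have := v.isLt; omega

lemma insHat_apply_lt {m : ℕ} (τ : Equiv.Perm (Fin m)) (p : Fin (m+1)) (j : Fin (m+1))
    (h : (j:ℕ) < (p:ℕ)) :
    insHat m τ p j = (τ ⟨j, lt_of_lt_of_le h (Nat.lt_succ_iff.mp p.isLt)⟩).castSucc := by
  simp only [insHat, Equiv.coe_fn_mk, dif_pos h]

lemma insHat_apply_eq {m : ℕ} (τ : Equiv.Perm (Fin m)) (p : Fin (m+1)) (j : Fin (m+1))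
    (h : (j:ℕ) = (p:ℕ)) : insHat m τ p j = Fin.last m := by
  simp only [insHat, Equiv.coe_fn_mk, dif_neg (by omega : ¬ (j:ℕ) < (p:ℕ)), dif_pos h]

lemma insHat_apply_gt {m : ℕ} (τ : Equiv.Perm (Fin m)) (p : Fin (m+1)) (j : Fin (m+1))
    (h : (p:ℕ) < (j:ℕ)) :
    insHat m τ p j = (τ ⟨(j:ℕ) - 1, by have := j.isLt; omega⟩).castSucc := by
  simp only [insHat, Equiv.coe_fn_mk, dif_neg (by omega : ¬ (j:ℕ) < (p:ℕ)),
    dif_neg (by omega : ¬ (j:ℕ) = (p:ℕ))]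

lemma perm_mk_congr {m : ℕ} (τ : Equiv.Perm (Fin m)) {a b : ℕ} (ha : a < m) (hb : b < m)
    (e : a = b) : τ ⟨a, ha⟩ = τ ⟨b, hb⟩ := by subst e; rfl

lemma insHat_apply_mk_lt {m : ℕ} (τ : Equiv.Perm (Fin m)) (p : Fin (m+1)) {a : ℕ}
    (ha : a < m+1) (h : a < (p:ℕ)) (ham : a < m) :
    insHat m τ p ⟨a, ha⟩ = (τ ⟨a, ham⟩).castSucc := by
  rw [insHat_apply_lt τ p ⟨a, ha⟩ h]

lemma insHat_apply_mk_eq {m : ℕ} (τ : Equiv.Perm (Fin m)) (p : Fin (m+1)) {a : ℕ}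
    (ha : a < m+1) (h : a = (p:ℕ)) :
    insHat m τ p ⟨a, ha⟩ = Fin.last m :=
  insHat_apply_eq τ p ⟨a, ha⟩ h

lemma insHat_apply_mk_succ {m : ℕ} (τ : Equiv.Perm (Fin m)) (p : Fin (m+1)) {a : ℕ}
    (ha : a + 1 < m+1) (h : (p:ℕ) < a + 1) (ham : a < m) :
    insHat m τ p ⟨a + 1, ha⟩ = (τ ⟨a, ham⟩).castSucc := by
  rw [insHat_apply_gt τ p ⟨a + 1, ha⟩ h]
  exact congrArg Fin.castSucc (perm_mk_congr τ _ ham rfl)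

lemma mem_DesSet_insHat {m : ℕ} (τ : Equiv.Perm (Fin m)) (p : Fin (m+1)) (i : ℕ) :
    i ∈ DesSet (m+1) (insHat m τ p) ↔
      (i + 1 < (p:ℕ) ∧ i ∈ DesSet m τ) ∨ (i = (p:ℕ) ∧ i < m) ∨
        ((p:ℕ) < i ∧ i - 1 ∈ DesSet m τ) := by
  have hpm : (p:ℕ) ≤ m := Nat.lt_succ_iff.mp p.isLt
  constructor
  · rw [mem_DesSet]
    rintro ⟨h, hlt⟩
    rcases lt_trichotomy (i+1) (p:ℕ) with hc | hc | hc
    · left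
      refine ⟨hc, ?_⟩
      rw [insHat_apply_mk_lt τ p h hc (by omega),
        insHat_apply_mk_lt τ p (Nat.lt_of_succ_lt h) (by omega) (by omega)] at hlt
      rw [Fin.castSucc_lt_castSucc_iff] at hlt
      rw [mem_DesSet]
      exact ⟨by omega, hlt⟩
    · exfalso
      rw [insHat_apply_mk_eq τ p h hc,
        insHat_apply_mk_lt τ p (Nat.lt_of_succ_lt h) (by omega) (by omega)] at hlt
      exact absurd hlt (Fin.castSucc_lt_last _).asymm
    · rcases Nat.lt_or_ge (i:ℕ) ((p:ℕ)+1) with hi | hi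
      · right; left
        exact ⟨by omega, by omega⟩
      · right; right
        have hpi : (p:ℕ) < i := by omega
        refine ⟨hpi, ?_⟩
        obtain ⟨t, rfl⟩ : ∃ t, i = t + 1 := ⟨i - 1, by omega⟩
        rw [insHat_apply_mk_succ τ p h (by omega) (by omega),
          insHat_apply_mk_succ τ p (Nat.lt_of_succ_lt h) (by omega) (by omega)] at hlt
        rw [Fin.castSucc_lt_castSucc_iff] at hlt
        rw [mem_DesSet]
        exact ⟨by omega, hlt⟩
  · rintro (⟨hc, hd⟩ | ⟨hc, hd⟩ | ⟨hc, hd⟩)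
    · rw [mem_DesSet] at hd ⊢
      obtain ⟨h1, hlt⟩ := hd
      refine ⟨by omega, ?_⟩
      rw [insHat_apply_mk_lt τ p (by omega) hc (by omega),
        insHat_apply_mk_lt τ p (by omega) (by omega) (by omega)]
      rw [Fin.castSucc_lt_castSucc_iff]
      exact hlt
    · rw [mem_DesSet]
      refine ⟨by omega, ?_⟩
      rw [insHat_apply_mk_eq τ p (by omega) hc,
        insHat_apply_mk_succ τ p (by omega) (by omega) (by omega)]
      exact Fin.castSucc_lt_last _
    · rw [mem_DesSet] at hd
      obtain ⟨h1, hlt⟩ := hd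
      obtain ⟨t, rfl⟩ : ∃ t, i = t + 1 := ⟨i - 1, by omega⟩
      rw [mem_DesSet]
      refine ⟨by omega, ?_⟩
      rw [insHat_apply_mk_succ τ p (by omega) (by omega) (by omega),
        insHat_apply_mk_succ τ p (by omega) (by omega) (by omega)]
      rw [Fin.castSucc_lt_castSucc_iff]
      exact hlt

noncomputable def Good (m : ℕ) (τ : Equiv.Perm (Fin m)) (p : Fin (m+1)) : Prop :=
  (p:ℕ) = m ∨ (1 ≤ (p:ℕ) ∧ (p:ℕ) - 1 ∈ DesSet m τ)

lemma DesSet_insHat_eq {m : ℕ} (τ : Equiv.Perm (Fin m)) (p : Fin (m+1)) :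
    DesSet (m+1) (insHat m τ p) =
      ((DesSet m τ).filter (fun t => t + 1 < (p:ℕ)) ∪
        ((DesSet m τ).filter (fun t => (p:ℕ) ≤ t)).image (· + 1)) ∪
      (if (p:ℕ) < m then {(p:ℕ)} else ∅) := by
  ext i
  rw [mem_DesSet_insHat]
  simp only [Finset.mem_union, Finset.mem_image, Finset.mem_filter]
  constructor
  · rintro (⟨h1, h2⟩ | ⟨h1, h2⟩ | ⟨h1, h2⟩)
    · exact Or.inl (Or.inl ⟨h2, h1⟩)
    · right; rw [if_pos (by omega)]; simp [h1]
    · exact Or.inl (Or.inr ⟨i - 1, ⟨h2, by omega⟩, by omega⟩)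
  · rintro ((⟨h1, h2⟩ | ⟨t, ⟨h1, h2⟩, h3⟩) | h1)
    · exact Or.inl ⟨h2, h1⟩
    · right; right
      refine ⟨by omega, ?_⟩
      rw [show i - 1 = t by omega]
      exact h1
    · right; left
      by_cases hpm : (p:ℕ) < m
      · rw [if_pos hpm] at h1
        simp only [Finset.mem_singleton] at h1
        exact ⟨h1, by omega⟩
      · rw [if_neg hpm] at h1
        simp at h1

lemma mem_DesSet_lt {m : ℕ} {τ : Equiv.Perm (Fin m)} {t : ℕ} (h : t ∈ DesSet m τ) :
    t + 1 < m := by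
  rw [mem_DesSet] at h; exact h.1

lemma numDescents_eq_card' (m : ℕ) (σ : Equiv.Perm (Fin m)) :
    numDescents m σ = (DesSet m σ).card := rfl

lemma numDescents_insHat {m : ℕ} (τ : Equiv.Perm (Fin m)) (p : Fin (m+1)) :
    numDescents (m+1) (insHat m τ p) =
      if Good m τ p then numDescents m τ else numDescents m τ + 1 := by
  have hpm : (p:ℕ) ≤ m := Nat.lt_succ_iff.mp p.isLt
  rw [numDescents_eq_card', numDescents_eq_card', DesSet_insHat_eq]
  have hdisj1 : Disjoint (((DesSet m τ).filter (fun t => t + 1 < (p:ℕ))))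
      ((((DesSet m τ).filter (fun t => (p:ℕ) ≤ t)).image (· + 1))) := by
    rw [Finset.disjoint_left]
    intro a ha hb
    simp only [Finset.mem_filter, Finset.mem_image] at ha hb
    obtain ⟨t, ⟨-, ht⟩, rfl⟩ := hb
    omega
  have hdisj2 : Disjoint (((DesSet m τ).filter (fun t => t + 1 < (p:ℕ)) ∪
      (((DesSet m τ).filter (fun t => (p:ℕ) ≤ t)).image (· + 1))))
      (if (p:ℕ) < m then ({(p:ℕ)} : Finset ℕ) else ∅) := by
    rw [Finset.disjoint_right]
    intro a ha hb
    split_ifs at ha with hc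
    · simp only [Finset.mem_singleton] at ha
      subst ha
      simp only [Finset.mem_union, Finset.mem_filter, Finset.mem_image] at hb
      rcases hb with ⟨-, h⟩ | ⟨t, ⟨-, ht⟩, h⟩ <;> omega
    · simp at ha
  rw [Finset.card_union_of_disjoint hdisj2, Finset.card_union_of_disjoint hdisj1,
    Finset.card_image_of_injective _ (add_left_injective 1)]
  have hsplit : ((DesSet m τ).filter (fun t => t + 1 < (p:ℕ))).card +
      ((DesSet m τ).filter (fun t => (p:ℕ) ≤ t)).card = ((DesSet m τ).filter (fun t => t + 1 ≠ (p:ℕ))).card := by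
    rw [← Finset.card_union_of_disjoint (by
      rw [Finset.disjoint_left]
      intro a ha hb
      simp only [Finset.mem_filter] at ha hb
      omega), Finset.filter_union_right]
    congr 1
    apply Finset.filter_congr
    intro t ht
    omega
  rw [hsplit]
  by_cases hg : Good m τ p
  · rw [if_pos hg]
    rcases hg with hg | ⟨hg1, hg2⟩
    · rw [if_neg (by omega)]
      rw [Finset.filter_true_of_mem (fun t ht => by have := mem_DesSet_lt ht; omega)]
      rw [Finset.card_empty]
      omega
    · have hplt : (p:ℕ) < m := by have := mem_DesSet_lt hg2; omega
      rw [if_pos hplt]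
      have herase : (DesSet m τ).filter (fun t => t + 1 ≠ (p:ℕ)) = (DesSet m τ).erase ((p:ℕ) - 1) := by
        ext t
        simp only [Finset.mem_filter, Finset.mem_erase]
        constructor
        · rintro ⟨h1, h2⟩; exact ⟨by omega, h1⟩
        · rintro ⟨h1, h2⟩; exact ⟨h2, by omega⟩
      rw [herase, Finset.card_erase_of_mem hg2, Finset.card_singleton]
      have : 1 ≤ (DesSet m τ).card := Finset.card_pos.mpr ⟨(p:ℕ) - 1, hg2⟩
      omega
  · rw [if_neg hg]
    have hplt : (p:ℕ) < m := by
      rcases Nat.lt_or_ge (p:ℕ) m with h | h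
      · exact h
      · exact absurd (Or.inl (by omega)) hg
    rw [if_pos hplt, Finset.card_singleton]
    rw [Finset.filter_true_of_mem]
    intro t ht hc
    exact hg (Or.inr ⟨by omega, by rw [show (p:ℕ) - 1 = t by omega]; exact ht⟩)

lemma insHat_injective {m : ℕ} {τ τ' : Equiv.Perm (Fin m)} {p p' : Fin (m+1)}
    (h : insHat m τ p = insHat m τ' p') : τ = τ' ∧ p = p' := by
  have hp : p = p' := by
    have h1 : insHat m τ' p' p = Fin.last m := by
      rw [← h]; exact insHat_apply_eq τ p p rfl
    have h2 : insHat m τ' p' p' = Fin.last m := insHat_apply_eq τ' p' p' rfl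
    exact (insHat m τ' p').injective (h1.trans h2.symm)
  subst hp
  refine ⟨?_, rfl⟩
  apply Equiv.ext
  intro x
  rcases Nat.lt_or_ge (x:ℕ) (p:ℕ) with hx | hx
  · have happ := DFunLike.congr_fun h x.castSucc
    rw [insHat_apply_lt τ p x.castSucc hx, insHat_apply_lt τ' p x.castSucc hx] at happ
    have h2 := Fin.castSucc_injective m happ
    have e : x = (⟨((x.castSucc : Fin (m+1)) : ℕ), by simpa using x.isLt⟩ : Fin m) :=
      Fin.ext (by simp)
    rw [e]
    exact h2
  · have hgt : (p:ℕ) < (x.succ : ℕ) := by rw [Fin.val_succ]; omega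
    have happ := DFunLike.congr_fun h x.succ
    rw [insHat_apply_gt τ p x.succ hgt, insHat_apply_gt τ' p x.succ hgt] at happ
    have h2 := Fin.castSucc_injective m happ
    have e : x = (⟨((x.succ : Fin (m+1)) : ℕ) - 1, by simpa using x.isLt⟩ : Fin m) :=
      Fin.ext (by simp)
    rw [e]
    exact h2

lemma numDescents_le (m : ℕ) (τ : Equiv.Perm (Fin m)) : numDescents m τ ≤ m := by
  simp only [numDescents]
  exact (Finset.card_filter_le _ _).trans (le_of_eq (Finset.card_range m))

lemma card_good (m : ℕ) (τ : Equiv.Perm (Fin m)) :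
    (Finset.univ.filter fun p : Fin (m+1) => Good m τ p).card = numDescents m τ + 1 := by
  have himg : (Finset.univ.filter fun p : Fin (m+1) => Good m τ p).image Fin.val =
      insert m ((DesSet m τ).image (· + 1)) := by
    ext x
    simp only [Finset.mem_image, Finset.mem_filter, Finset.mem_univ, true_and,
      Finset.mem_insert]
    constructor
    · rintro ⟨p, hp, rfl⟩
      rcases hp with h | ⟨h1, h2⟩
      · left; exact h
      · right; exact ⟨(p:ℕ) - 1, h2, by omega⟩
    · rintro (rfl | ⟨t, ht, rfl⟩)
      · exact ⟨Fin.last x, Or.inl (by simp), by simp⟩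
      · refine ⟨⟨t + 1, by have := mem_DesSet_lt ht; omega⟩, Or.inr ⟨Nat.succ_le_succ (Nat.zero_le t), ?_⟩, rfl⟩
        exact ht
  calc (Finset.univ.filter fun p : Fin (m+1) => Good m τ p).card
      = ((Finset.univ.filter fun p : Fin (m+1) => Good m τ p).image Fin.val).card :=
        (Finset.card_image_of_injective _ Fin.val_injective).symm
    _ = (insert m ((DesSet m τ).image (· + 1))).card := by rw [himg]
    _ = numDescents m τ + 1 := by
        rw [Finset.card_insert_of_notMem (by
          simp only [Finset.mem_image]
          rintro ⟨t, ht, h⟩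
          have := mem_DesSet_lt ht
          omega),
          Finset.card_image_of_injective _ (add_left_injective 1), numDescents_eq_card']

lemma card_bad (m : ℕ) (τ : Equiv.Perm (Fin m)) :
    (Finset.univ.filter fun p : Fin (m+1) => ¬ Good m τ p).card = m - numDescents m τ := by
  have h1 := Finset.card_filter_add_card_filter_not
    (s := (Finset.univ : Finset (Fin (m+1)))) (p := Good m τ)
  rw [card_good, Finset.card_univ, Fintype.card_fin] at h1
  have h2 := numDescents_le m τ
  omega

lemma eulerian_rec (m k : ℕ) :
    (k + 2) * eulerian m (k + 1) + (m - k) * eulerian m k ≤ eulerian (m + 1) (k + 1) := by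
  set S1 : Finset (Equiv.Perm (Fin m) × Fin (m+1)) :=
    Finset.univ.filter (fun q => numDescents m q.1 = k + 1 ∧ Good m q.1 q.2) with hS1
  set S2 : Finset (Equiv.Perm (Fin m) × Fin (m+1)) :=
    Finset.univ.filter (fun q => numDescents m q.1 = k ∧ ¬ Good m q.1 q.2) with hS2
  have hsub : (S1 ∪ S2).image (fun q => insHat m q.1 q.2) ⊆
      Finset.univ.filter (fun σ => numDescents (m+1) σ = k + 1) := by
    intro σ hσ
    rw [Finset.mem_image] at hσ
    obtain ⟨q, hq, rfl⟩ := hσ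
    rw [Finset.mem_union, hS1, hS2, Finset.mem_filter, Finset.mem_filter] at hq
    rw [Finset.mem_filter]
    refine ⟨Finset.mem_univ _, ?_⟩
    rcases hq with ⟨-, h1, h2⟩ | ⟨-, h1, h2⟩
    · rw [numDescents_insHat, if_pos h2, h1]
    · rw [numDescents_insHat, if_neg h2, h1]
  have hinj : Set.InjOn (fun q : Equiv.Perm (Fin m) × Fin (m+1) => insHat m q.1 q.2)
      ((S1 ∪ S2 : Finset _) : Set _) := by
    intro q _ q' _ h
    obtain ⟨h1, h2⟩ := insHat_injective h
    exact Prod.ext h1 h2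
  have hdisj : Disjoint S1 S2 := by
    rw [Finset.disjoint_left]
    intro q h1 h2
    rw [hS1, Finset.mem_filter] at h1
    rw [hS2, Finset.mem_filter] at h2
    exact h2.2.2 h1.2.2
  have hcard1 : S1.card = (k + 2) * eulerian m (k + 1) := by
    have hmem : ∀ q ∈ S1, q.1 ∈ Finset.univ.filter
        (fun τ : Equiv.Perm (Fin m) => numDescents m τ = k + 1) := by
      intro q hq
      rw [hS1, Finset.mem_filter] at hq
      rw [Finset.mem_filter]
      exact ⟨Finset.mem_univ _, hq.2.1⟩
    rw [Finset.card_eq_sum_card_fiberwise hmem]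
    have hfib : ∀ τ ∈ Finset.univ.filter
        (fun τ : Equiv.Perm (Fin m) => numDescents m τ = k + 1),
        (S1.filter (fun q => q.1 = τ)).card = k + 2 := by
      intro τ hτ
      rw [Finset.mem_filter] at hτ
      have hprod : S1.filter (fun q => q.1 = τ) =
          {τ} ×ˢ (Finset.univ.filter fun p : Fin (m+1) => Good m τ p) := by
        ext q
        rw [Finset.mem_filter, hS1, Finset.mem_filter, Finset.mem_product,
          Finset.mem_singleton, Finset.mem_filter]
        constructor
        · rintro ⟨⟨-, -, hg⟩, he⟩
          exact ⟨he, Finset.mem_univ _, he ▸ hg⟩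
        · rintro ⟨he, -, hg⟩
          refine ⟨⟨Finset.mem_univ _, ?_, ?_⟩, he⟩
          · rw [he]; exact hτ.2
          · rw [he]; exact hg
      rw [hprod, Finset.card_product, Finset.card_singleton, one_mul, card_good, hτ.2]
    rw [Finset.sum_congr rfl hfib, Finset.sum_const, smul_eq_mul, mul_comm]
    rfl
  have hcard2 : S2.card = (m - k) * eulerian m k := by
    have hmem : ∀ q ∈ S2, q.1 ∈ Finset.univ.filter
        (fun τ : Equiv.Perm (Fin m) => numDescents m τ = k) := by
      intro q hq
      rw [hS2, Finset.mem_filter] at hq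
      rw [Finset.mem_filter]
      exact ⟨Finset.mem_univ _, hq.2.1⟩
    rw [Finset.card_eq_sum_card_fiberwise hmem]
    have hfib : ∀ τ ∈ Finset.univ.filter
        (fun τ : Equiv.Perm (Fin m) => numDescents m τ = k),
        (S2.filter (fun q => q.1 = τ)).card = m - k := by
      intro τ hτ
      rw [Finset.mem_filter] at hτ
      have hprod : S2.filter (fun q => q.1 = τ) =
          {τ} ×ˢ (Finset.univ.filter fun p : Fin (m+1) => ¬ Good m τ p) := by
        ext q
        rw [Finset.mem_filter, hS2, Finset.mem_filter, Finset.mem_product,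
          Finset.mem_singleton, Finset.mem_filter]
        constructor
        · rintro ⟨⟨-, -, hg⟩, he⟩
          exact ⟨he, Finset.mem_univ _, he ▸ hg⟩
        · rintro ⟨he, -, hg⟩
          refine ⟨⟨Finset.mem_univ _, ?_, ?_⟩, he⟩
          · rw [he]; exact hτ.2
          · rw [he]; exact hg
      rw [hprod, Finset.card_product, Finset.card_singleton, one_mul, card_bad, hτ.2]
    rw [Finset.sum_congr rfl hfib, Finset.sum_const, smul_eq_mul, mul_comm]
    rfl
  calc (k + 2) * eulerian m (k + 1) + (m - k) * eulerian m k
      = S1.card + S2.card := by rw [hcard1, hcard2]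
    _ = (S1 ∪ S2).card := (Finset.card_union_of_disjoint hdisj).symm
    _ = ((S1 ∪ S2).image (fun q => insHat m q.1 q.2)).card :=
        (Finset.card_image_of_injOn hinj).symm
    _ ≤ eulerian (m+1) (k+1) := Finset.card_le_card hsub

lemma numDescents_one (m : ℕ) : numDescents m (1 : Equiv.Perm (Fin m)) = 0 := by
  simp only [numDescents, Finset.card_eq_zero]
  rw [Finset.filter_false_of_mem]
  intro i _
  rintro ⟨h, hlt⟩
  rw [Equiv.Perm.one_apply, Equiv.Perm.one_apply, Fin.lt_def] at hlt
  simp at hlt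

lemma one_le_eulerian_zero (m : ℕ) : 1 ≤ eulerian m 0 := by
  rw [Nat.one_le_iff_ne_zero, ← Nat.pos_iff_ne_zero, eulerian, Finset.card_pos]
  exact ⟨1, Finset.mem_filter.mpr ⟨Finset.mem_univ _, numDescents_one m⟩⟩

lemma amgm (C D : ℕ) : 2 * (C * D) ≤ C ^ 2 + D ^ 2 := by
  zify
  nlinarith [sq_nonneg ((C : ℤ) - D)]

lemma main_ineq : ∀ n i : ℕ, n.choose i ^ 2 ≤ eulerian (n + 1) i := by
  intro n
  induction n with
  | zero =>
    intro i
    cases i with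
    | zero => simpa using one_le_eulerian_zero 1
    | succ j => simp [Nat.choose_succ_succ]
  | succ n ih =>
    intro i
    cases i with
    | zero => simpa using one_le_eulerian_zero (n + 2)
    | succ j =>
      have hrec := eulerian_rec (n + 1) j
      have hX := ih (j + 1)
      have hY := ih j
      have hpas : (n + 1).choose (j + 1) = n.choose j + n.choose (j + 1) :=
        Nat.choose_succ_succ n j
      by_cases hj : j + 1 ≤ n
      · refine le_trans ?_ hrec
        rw [hpas]
        calc (n.choose j + n.choose (j + 1)) ^ 2
            = n.choose j ^ 2 + 2 * (n.choose (j + 1) * n.choose j) + n.choose (j + 1) ^ 2 := by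
              ring
          _ ≤ n.choose j ^ 2 + (n.choose (j + 1) ^ 2 + n.choose j ^ 2) + n.choose (j + 1) ^ 2 := by
              have := amgm (n.choose (j + 1)) (n.choose j)
              omega
          _ = 2 * n.choose (j + 1) ^ 2 + 2 * n.choose j ^ 2 := by ring
          _ ≤ (j + 2) * eulerian (n + 1) (j + 1) + (n + 1 - j) * eulerian (n + 1) j := by
              have h1 : 2 * n.choose (j + 1) ^ 2 ≤ (j + 2) * eulerian (n + 1) (j + 1) :=
                Nat.mul_le_mul (by omega) hX
              have h2 : 2 * n.choose j ^ 2 ≤ (n + 1 - j) * eulerian (n + 1) j :=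
                Nat.mul_le_mul (by omega) hY
              omega
      · by_cases hjn : n < j
        · have h0 : (n + 1).choose (j + 1) = 0 := Nat.choose_eq_zero_of_lt (by omega)
          rw [h0]
          simp
        · have hjeq : j = n := by omega
          subst hjeq
          have hC : j.choose (j + 1) = 0 := Nat.choose_eq_zero_of_lt (by omega)
          rw [hpas, hC, Nat.add_zero, Nat.choose_self]
          have h3 : (j + 1 - j) * eulerian (j + 1) j ≤ eulerian (j + 2) (j + 1) :=
            le_trans (Nat.le_add_left _ _) hrec
          have h4 : j + 1 - j = 1 := by omega
          rw [h4, one_mul] at h3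
          have h5 : 1 ≤ eulerian (j + 1) j := by
            rw [Nat.choose_self] at hY
            simpa using hY
          calc (1 : ℕ) ^ 2 = 1 := one_pow 1
            _ ≤ eulerian (j + 1) j := h5
            _ ≤ eulerian (j + 2) (j + 1) := h3

/-- `h_i(Cy^n) ≤ h_i(Pe^n)`: for `n ≥ 1` and `0 ≤ i ≤ n`, `binom(n,i)² ≤ A(n+1,i)`. -/
theorem cyclohedron_le_permutohedron_h (n i : ℕ) (hn : 1 ≤ n) (hi : i ≤ n) :
    n.choose i ^ 2 ≤ eulerian (n + 1) i :=
  main_ineq n i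
end

section
/- For all natural numbers n ≥ 1 and 1 ≤ i ≤ n: Σ_{k=i}^{n} binom(n,k)·A(k,i−1) ≤ A(n+1,i), where A(m,k) is the Eulerian number. -/
/-! Write a permutation of `{0,…,n}` as a word. For `S ⊆ {0,…,n-1}` and an arrangement `σ` of `S`,
the word "`Sᶜ` in increasing order, then `n`, then `S` in the order `σ`" has exactly `des σ + 1`
descents when `S ≠ ∅`: the increasing prefix contributes nothing and the maximum `n` contributes
one. Different pairs `(S, σ)` give different words, so the pairs with `|S| ≥ i` and `des σ = i - 1`,
which the left-hand side counts, inject into the permutations of `{0,…,n}` with `i` descents. -/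

open Finset
open scoped Classical

namespace List

variable {α β : Type*} [LinearOrder α] [LinearOrder β]

def descentCount : List α → ℕ
  | a :: b :: l => (if b < a then 1 else 0) + descentCount (b :: l)
  | _ => 0

@[simp]
theorem descentCount_singleton (a : α) : [a].descentCount = 0 := rfl

@[simp]
theorem descentCount_cons_cons (a b : α) (l : List α) :
    (a :: b :: l).descentCount = (if b < a then 1 else 0) + (b :: l).descentCount := rfl

theorem descentCount_map {f : α → β} (hf : StrictMono f) :
    ∀ l : List α, (l.map f).descentCount = l.descentCount
  | [] | [_] => rfl
  | a :: b :: l => by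
    simp only [map_cons, descentCount_cons_cons, hf.lt_iff_lt]
    rw [← map_cons, descentCount_map hf (b :: l)]

theorem descentCount_cons_of_forall_lt {a : α} {l : List α} (hl : l ≠ [])
    (h : ∀ b ∈ l, b < a) :
    (a :: l).descentCount = l.descentCount + 1 := by
  obtain ⟨b, l, rfl⟩ := exists_cons_of_ne_nil hl
  simp [h b mem_cons_self, add_comm]

theorem descentCount_append_cons_of_isChain {a : α} (l₂ : List α) :
    ∀ {l₁ : List α}, (l₁ ++ [a]).IsChain (· ≤ ·) →
      (l₁ ++ a :: l₂).descentCount = (a :: l₂).descentCount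
  | [], _ => rfl
  | [x], h => by
    rw [singleton_append, isChain_pair] at h
    rw [singleton_append, descentCount_cons_cons, if_neg (not_lt.2 h), zero_add]
  | x :: y :: l₁, h => by
    rw [cons_append, cons_append, isChain_cons_cons, ← cons_append] at h
    rw [cons_append, cons_append, descentCount_cons_cons, ← cons_append,
      descentCount_append_cons_of_isChain l₂ h.2, if_neg (not_lt.2 h.1), zero_add]

theorem descentCount_ofFn {m : ℕ} (f : Fin m → α) :
    (ofFn f).descentCount =
      #{i ∈ Finset.range m | ∃ h : i + 1 < m, f ⟨i + 1, h⟩ < f ⟨i, Nat.lt_of_succ_lt h⟩} := by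
  induction m with
  | zero => rfl
  | succ m ih =>
    cases m with
    | zero => simp
    | succ m =>
      rw [ofFn_succ, ofFn_succ, descentCount_cons_cons, ← ofFn_succ (f := fun i => f i.succ), ih,
        card_filter, card_filter, Finset.sum_range_succ' _ (m + 1), add_comm]
      congr 1
      · simp [Fin.succ]
      · simp only [zero_add, Nat.one_lt_succ_succ, exists_true_left]
        rfl

end List

theorem numDescents_eq_descentCount_ofFn {m : ℕ} (σ : Equiv.Perm (Fin m)) :
    numDescents m σ = (List.ofFn σ).descentCount :=
  (List.descentCount_ofFn σ).symm

theorem List.Nodup.exists_ofFn_eq_of_length_eq {m : ℕ} {l : List (Fin m)} (hl : l.Nodup)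
    (hlen : l.length = m) : ∃ π : Equiv.Perm (Fin m), List.ofFn π = l := by
  have hinj : Function.Injective fun p : Fin m => l.get (Fin.cast hlen.symm p) :=
    (List.nodup_iff_injective_get.1 hl).comp (Fin.cast_injective _)
  refine ⟨Equiv.ofBijective _ (Finite.injective_iff_bijective.1 hinj), ?_⟩
  exact List.ext_getElem (by simpa using hlen.symm) fun _ _ _ => by simp

theorem Finset.sum_powerset_filter_le_card {β M : Type*} [AddCommMonoid M] (s : Finset β) (i : ℕ)
    (f : ℕ → M) :
    ∑ t ∈ s.powerset with i ≤ #t, f #t = ∑ k ∈ Icc i #s, (#s).choose k • f k := by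
  rw [sum_filter, sum_powerset_apply_card fun k => if i ≤ k then f k else 0]
  simp only [smul_ite, smul_zero]
  rw [← sum_filter]
  congr 1
  ext k
  simp only [mem_filter, mem_range, mem_Icc]
  omega

variable {n : ℕ}

def wordOfSubsetPerm (S : Finset (Fin n)) (σ : Equiv.Perm (Fin #S)) : List (Fin (n + 1)) :=
  (Sᶜ.sort (· ≤ ·)).map Fin.castSucc ++
    Fin.last n :: (List.ofFn (S.orderEmbOfFin rfl ∘ σ)).map Fin.castSucc

theorem length_wordOfSubsetPerm (S : Finset (Fin n)) (σ : Equiv.Perm (Fin #S)) :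
    (wordOfSubsetPerm S σ).length = n + 1 := by
  have : #S ≤ n := by simpa using S.card_le_univ
  simp only [wordOfSubsetPerm, List.length_append, List.length_map, length_sort, card_compl,
    Fintype.card_fin, List.length_cons, List.length_ofFn]
  omega

theorem nodup_wordOfSubsetPerm (S : Finset (Fin n)) (σ : Equiv.Perm (Fin #S)) :
    (wordOfSubsetPerm S σ).Nodup := by
  simp only [wordOfSubsetPerm, List.nodup_append, List.nodup_cons, List.nodup_ofFn, List.map_ofFn]
  refine ⟨(sort_nodup _ _).map (Fin.castSucc_injective n), ⟨by simp,
    (Fin.castSucc_injective n).comp ((S.orderEmbOfFin rfl).injective.comp σ.injective)⟩, ?_⟩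
  simp only [List.mem_map, mem_sort, mem_compl, List.mem_cons, List.mem_ofFn]
  rintro _ ⟨a, ha, rfl⟩ _ (rfl | ⟨j, rfl⟩)
  · exact Fin.castSucc_ne_last a
  · exact fun h => ha (Fin.castSucc_injective n h ▸ S.orderEmbOfFin_mem rfl _)

theorem descentCount_wordOfSubsetPerm {S : Finset (Fin n)} (hS : S.Nonempty)
    (σ : Equiv.Perm (Fin #S)) :
    (wordOfSubsetPerm S σ).descentCount = numDescents #S σ + 1 := by
  have hchain : ((Sᶜ.sort (· ≤ ·)).map Fin.castSucc ++ [Fin.last n]).IsChain (· ≤ ·) := by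
    refine List.Pairwise.isChain (List.pairwise_append.2 ⟨?_, List.pairwise_singleton _ _, ?_⟩)
    · exact (pairwise_sort _ _).map _ fun _ _ => Fin.castSucc_le_castSucc_iff.2
    · simp [Fin.le_last]
  have hne : (List.ofFn (S.orderEmbOfFin rfl ∘ σ)).map Fin.castSucc ≠ [] := by
    simpa using hS.card_ne_zero
  rw [wordOfSubsetPerm, List.descentCount_append_cons_of_isChain _ hchain,
    List.descentCount_cons_of_forall_lt hne (by simp [Fin.castSucc_lt_last]),
    List.descentCount_map Fin.strictMono_castSucc, ← List.map_ofFn,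
    List.descentCount_map (S.orderEmbOfFin rfl).strictMono, numDescents_eq_descentCount_ofFn]

theorem wordOfSubsetPerm_injective :
    Function.Injective fun x : Σ S : Finset (Fin n), Equiv.Perm (Fin #S) =>
      wordOfSubsetPerm x.1 x.2 := by
  rintro ⟨S, σ⟩ ⟨S', σ'⟩ h
  obtain ⟨hcompl, -, htail⟩ := (List.append_cons_inj_of_notMem (by simp) (by simp)).1 h
  have hmap := List.map_injective_iff.2 (Fin.castSucc_injective n)
  obtain rfl : S = S' := by
    rw [← compl_inj_iff, ← sort_toFinset Sᶜ (· ≤ ·), hmap hcompl, sort_toFinset]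
  obtain rfl : σ = σ' :=
    Equiv.ext fun j =>
      (S.orderEmbOfFin rfl).injective (congrFun (List.ofFn_injective (hmap htail)) j)
  rfl

theorem exists_perm_ofFn_eq_wordOfSubsetPerm {S : Finset (Fin n)} (hS : S.Nonempty)
    (σ : Equiv.Perm (Fin #S)) :
    ∃ π : Equiv.Perm (Fin (n + 1)),
      List.ofFn π = wordOfSubsetPerm S σ ∧ numDescents (n + 1) π = numDescents #S σ + 1 := by
  obtain ⟨π, hπ⟩ :=
    (nodup_wordOfSubsetPerm S σ).exists_ofFn_eq_of_length_eq (length_wordOfSubsetPerm S σ)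
  exact ⟨π, hπ, by rw [numDescents_eq_descentCount_ofFn, hπ, descentCount_wordOfSubsetPerm hS]⟩

theorem stellohedron_le_permutohedron_h_general (n i : ℕ) (hi1 : 1 ≤ i) :
    ∑ k ∈ Finset.Icc i n, n.choose k * eulerian k (i - 1) ≤ eulerian (n + 1) i := by
  set D := {S ∈ (univ : Finset (Fin n)).powerset | i ≤ #S}.sigma fun S =>
    {σ : Equiv.Perm (Fin #S) | numDescents #S σ = i - 1}
  have hD : #D = ∑ k ∈ Icc i n, n.choose k * eulerian k (i - 1) := by
    have h := sum_powerset_filter_le_card (univ : Finset (Fin n)) i (eulerian · (i - 1))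
    simp only [card_univ, Fintype.card_fin, smul_eq_mul] at h
    rwa [card_sigma]
  have hmaps : ∀ x ∈ D, wordOfSubsetPerm x.1 x.2 ∈
      (univ.filter fun π : Equiv.Perm (Fin (n + 1)) => numDescents (n + 1) π = i).image
        fun π : Equiv.Perm (Fin (n + 1)) => List.ofFn ⇑π := by
    rintro ⟨S, σ⟩ hx
    simp only [D, mem_sigma, mem_filter, mem_univ, true_and, mem_powerset] at hx
    obtain ⟨π, hπ, hdes⟩ := exists_perm_ofFn_eq_wordOfSubsetPerm (card_pos.1 (by omega)) σ
    exact mem_image.2 ⟨π, mem_filter.2 ⟨mem_univ _, by omega⟩, hπ⟩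
  calc ∑ k ∈ Icc i n, n.choose k * eulerian k (i - 1) = #D := hD.symm
    _ ≤ _ := card_le_card_of_injOn _ hmaps wordOfSubsetPerm_injective.injOn
    _ = eulerian (n + 1) i :=
      card_image_of_injective _ (List.ofFn_injective.comp DFunLike.coe_injective)

/-- `h_i(St^n) ≤ h_i(Pe^n)`: for `n ≥ 1` and `1 ≤ i ≤ n`,
`Σ_{k=i}^{n} binom(n,k)·A(k,i−1) ≤ A(n+1,i)`. -/
theorem stellohedron_le_permutohedron_h (n i : ℕ) (hn : 1 ≤ n) (hi1 : 1 ≤ i) (hi : i ≤ n) :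
    ∑ k ∈ Finset.Icc i n, n.choose k * eulerian k (i - 1) ≤ eulerian (n + 1) i :=
  stellohedron_le_permutohedron_h_general n i hi1
end
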